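/- arXiv:2202.12183 — 6 statements merged into one kernel-verified Lean document; each statement's English description precedes it below -/
import Mathlib

section
/- Suppose the surrogate loss dominates the indicator, i.e. for every query q and all items x', x in S_q one has ℓ(h_q(x'; w) − h_q(x; w)) ≥ 1[h_q(x'; w) − h_q(x; w) ≥ 0]. Then L(w) ≤ NDCG(w); that is, the smooth NDCG surrogate (1/N) Σ_{q=1}^N (1/Z_q) Σ_{x_i ∈ S_q^+} (2^{y_i^q} − 1) / log₂(ḡ(w; x_i^q, S_q) + 1) is a lower bound of the NDCG value (1/N) Σ_{q=1}^N (1/Z_q) Σ_{x_i ∈ S_q^+} (2^{y_i^q} − 1) / log₂(r(w; x_i^q, S_q) + 1). -/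
open Finset Real
open scoped Classical

theorem one_le_sum_ite_sub_nonneg {ι : Type*} {s : Finset ι} {x : ι} (hx : x ∈ s) (f : ι → ℝ) :
    1 ≤ ∑ x' ∈ s, if 0 ≤ f x' - f x then (1 : ℝ) else 0 := by
  simpa using single_le_sum (f := fun x' => if 0 ≤ f x' - f x then (1 : ℝ) else 0)
    (fun _ _ => by positivity) hx

theorem div_logb_add_one_le_of_le {b a r g : ℝ} (hb : 1 < b) (ha : 0 ≤ a) (hr : 0 < r)
    (hrg : r ≤ g) : a / logb b (g + 1) ≤ a / logb b (r + 1) :=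
  div_le_div_of_nonneg_left ha (logb_pos hb (by linarith))
    (logb_le_logb_of_le hb (by linarith) (by linarith))

theorem ndcg_surrogate_lower_bound_general
    {ι : Type*} (N : ℕ)
    (S : Fin N → Finset ι)
    (y : Fin N → ι → ℝ)
    (Z : Fin N → ℝ) (hZ : ∀ q, 0 < Z q)
    (h : Fin N → ι → ℝ) (ℓ : ℝ → ℝ)
    (hdom : ∀ q, ∀ x' ∈ S q, ∀ x ∈ S q,
      (if 0 ≤ h q x' - h q x then (1 : ℝ) else 0) ≤ ℓ (h q x' - h q x)) :
    (1 / N : ℝ) * ∑ q, (1 / Z q) *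
        ∑ x ∈ (S q).filter (fun x => 0 < y q x),
          ((2 : ℝ) ^ (y q x) - 1) /
            Real.logb 2 ((∑ x' ∈ S q, ℓ (h q x' - h q x)) + 1)
      ≤ (1 / N : ℝ) * ∑ q, (1 / Z q) *
        ∑ x ∈ (S q).filter (fun x => 0 < y q x),
          ((2 : ℝ) ^ (y q x) - 1) /
            Real.logb 2
              ((∑ x' ∈ S q, if 0 ≤ h q x' - h q x then (1 : ℝ) else 0) + 1) := by
  gcongr _ * ∑ q, _ * ∑ x ∈ _, ?_ with q _ x hx
  · exact (one_div_pos.2 (hZ q)).le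
  obtain ⟨hxS, hyx⟩ := mem_filter.1 hx
  exact div_logb_add_one_le_of_le one_lt_two (sub_nonneg.2 (one_le_rpow one_le_two hyx.le))
    (one_pos.trans_le (one_le_sum_ite_sub_nonneg hxS (h q))) (sum_le_sum fun x' hx' => hdom q x' hx' x hxS)

/-- if the surrogate loss `ℓ` dominates the 0-1 indicator pointwise, then the
smooth NDCG surrogate `L(w)` is a lower bound on the NDCG value. -/
theorem ndcg_surrogate_lower_bound
    {ι : Type*} (N : ℕ) (hN : 0 < N)
    (S : Fin N → Finset ι) (hS : ∀ q, (S q).Nonempty)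
    (y : Fin N → ι → ℝ) (hy : ∀ q, ∀ x ∈ S q, 0 ≤ y q x)
    (Z : Fin N → ℝ) (hZ : ∀ q, 0 < Z q)
    (h : Fin N → ι → ℝ) (ℓ : ℝ → ℝ)
    (hdom : ∀ q, ∀ x' ∈ S q, ∀ x ∈ S q,
      (if 0 ≤ h q x' - h q x then (1 : ℝ) else 0) ≤ ℓ (h q x' - h q x)) :
    (1 / N : ℝ) * ∑ q, (1 / Z q) *
        ∑ x ∈ (S q).filter (fun x => 0 < y q x),
          ((2 : ℝ) ^ (y q x) - 1) /
            Real.logb 2 ((∑ x' ∈ S q, ℓ (h q x' - h q x)) + 1)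
      ≤ (1 / N : ℝ) * ∑ q, (1 / Z q) *
        ∑ x ∈ (S q).filter (fun x => 0 < y q x),
          ((2 : ℝ) ^ (y q x) - 1) /
            Real.logb 2
              ((∑ x' ∈ S q, if 0 ≤ h q x' - h q x then (1 : ℝ) else 0) + 1) :=
  ndcg_surrogate_lower_bound_general N S y Z hZ h ℓ hdom
end

section
/- Let a_1, …, a_n be real numbers and let 1 ≤ K ≤ n. Define φ(λ) = Kλ + Σ_{i=1}^n max(a_i − λ, 0). Then the K-th largest value among a_1, …, a_n is a minimizer of φ over ℝ, i.e. φ(a_{(K)}) ≤ φ(λ) for all λ ∈ ℝ, where a_{(1)} ≥ a_{(2)} ≥ ⋯ ≥ a_{(n)} denotes the decreasing rearrangement of the a_i. -/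
/-!
For any `K`-element index set `S`, the bound `a i ≤ λ + (a i - λ)₊` on `S` and `0 ≤ (a i - λ)₊`
off `S` give `∑_{i ∈ S} a i ≤ Kλ + ∑ᵢ (a i - λ)₊`. Taking for `S` the indices of the `K` largest
values and `λ = a_{(K)}`, both bounds are equalities, so `φ(a_{(K)}) = ∑_{i ∈ S} a i ≤ φ(λ)`.
-/

open Finset

section PositivePartSum

variable {ι R : Type*} [Fintype ι] [AddCommGroup R] [LinearOrder R] [IsOrderedAddMonoid R]

theorem sum_le_card_nsmul_add_sum_max_sub (a : ι → R) (S : Finset ι) (l : R) :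
    ∑ i ∈ S, a i ≤ #S • l + ∑ i, max (a i - l) 0 := by
  classical
  calc ∑ i ∈ S, a i ≤ ∑ i ∈ S, (l + max (a i - l) 0) :=
        sum_le_sum fun i _ => by rw [← sub_le_iff_le_add']; exact le_max_left _ _
    _ = #S • l + ∑ i ∈ S, max (a i - l) 0 := by rw [sum_add_distrib, sum_const]
    _ ≤ #S • l + ∑ i, max (a i - l) 0 :=
        add_le_add_right (sum_le_univ_sum_of_nonneg fun i => le_max_right (a i - l) 0) _

theorem card_nsmul_add_sum_max_sub_eq_sum {a : ι → R} {S : Finset ι} {t : R}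
    (h_mem : ∀ i ∈ S, t ≤ a i) (h_not_mem : ∀ i ∉ S, a i ≤ t) :
    #S • t + ∑ i, max (a i - t) 0 = ∑ i ∈ S, a i := by
  classical
  have h_in : ∀ i ∈ S, max (a i - t) 0 = a i - t := fun i hi =>
    max_eq_left (sub_nonneg.mpr (h_mem i hi))
  have h_out : ∀ i ∈ Sᶜ, max (a i - t) 0 = 0 := fun i hi =>
    max_eq_right (sub_nonpos.mpr (h_not_mem i (mem_compl.mp hi)))
  rw [← sum_add_sum_compl S, sum_congr rfl h_in, sum_congr rfl h_out, sum_const_zero,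
    add_zero, sum_sub_distrib, sum_const, add_sub_cancel]

end PositivePartSum

/-- The decreasing rearrangement is encoded by a permutation `σ` with `i ↦ a (σ i)` antitone,
so `a (σ ⟨K-1, _⟩)` is the K-th largest value. -/
theorem kth_largest_minimizes
    (n K : ℕ) (hK : 1 ≤ K) (hKn : K ≤ n) (a : Fin n → ℝ)
    (σ : Equiv.Perm (Fin n)) (hσ : Antitone fun i => a (σ i)) (lam : ℝ) :
    (K : ℝ) * a (σ ⟨K - 1, by omega⟩) +
        ∑ i, max (a i - a (σ ⟨K - 1, by omega⟩)) 0
      ≤ (K : ℝ) * lam + ∑ i, max (a i - lam) 0 := by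
  set k : Fin n := ⟨K - 1, by omega⟩
  set S : Finset (Fin n) := (Iic k).map σ.toEmbedding
  have h_card : #S = K := by
    rw [card_map, Fin.card_Iic]
    simp only [k]
    omega
  have h_mem : ∀ i ∈ S, a (σ k) ≤ a i := fun i hi => by
    simpa using hσ (mem_Iic.mp (mem_map_equiv.mp hi))
  have h_not_mem : ∀ i ∉ S, a i ≤ a (σ k) := fun i hi => by
    simpa using hσ (not_le.mp (mt mem_Iic.mpr (mt mem_map_equiv.mpr hi))).le
  simp only [← h_card, ← nsmul_eq_mul]
  rw [card_nsmul_add_sum_max_sub_eq_sum h_mem h_not_mem]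
  exact sum_le_card_nsmul_add_sum_max_sub a S lam
end

section
/- Fix a parameter w. Suppose that: (i) there is a constant C > 0 such that for every query q and every item x_i^q ∈ S_q^+ one has ψ(h_q(x_i^q; w) − λ_q(w)) ≤ C · 1[h_q(x_i^q; w) − λ_q(w) ≥ 0], where λ_q(w) is such that h_q(x; w) ≥ λ_q(w) holds exactly for the items x in the top-K set S_q[K]; and (ii) ℓ(h_q(x'; w) − h_q(x; w)) ≥ 1[h_q(x'; w) − h_q(x; w) ≥ 0] for all items x', x ∈ S_q. Then (1/N) Σ_{q=1}^N Σ_{x_i ∈ S_q^+} ψ(h_q(x_i^q; w) − λ_q(w)) (2^{y_i^q} − 1) / (C Z_q^K log₂(ḡ(w; x_i^q, S_q) + 1)) ≤ (1/N) Σ_{q=1}^N (1/Z_q^K) Σ_{x_i ∈ S_q^+} 1[x_i^q ∈ S_q[K]] (2^{y_i^q} − 1) / log₂(r(w; x_i^q, S_q) + 1), i.e. the smoothed top-K surrogate is a lower bound of the top-K NDCG value. -/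
open Finset Real
open scoped Classical

/-!
The inequality holds term by term. An item counts itself, so its rank `r` is at least `1`, and
`ℓ` dominates the indicator, so `r ≤ ḡ`; hence `0 < log₂ (r + 1) ≤ log₂ (ḡ + 1)`. Since `λ_q`
cuts off exactly the top-`K` items, the hypothesis on `ψ` reads `ψ ≤ C · 1[x ∈ S_q[K]]`.
-/

section Rank

variable {ι : Type*}

noncomputable def rank (f : ι → ℝ) (s : Finset ι) (x : ι) : ℝ :=
  ∑ x' ∈ s, if 0 ≤ f x' - f x then (1 : ℝ) else 0

def surrogateRank (ℓ : ℝ → ℝ) (f : ι → ℝ) (s : Finset ι) (x : ι) : ℝ :=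
  ∑ x' ∈ s, ℓ (f x' - f x)

variable {s : Finset ι} {x : ι}

lemma one_le_rank (f : ι → ℝ) (hx : x ∈ s) : 1 ≤ rank f s x :=
  calc (1 : ℝ) = if 0 ≤ f x - f x then 1 else 0 := by simp
    _ ≤ rank f s x :=
      single_le_sum (f := fun x' => if 0 ≤ f x' - f x then (1 : ℝ) else 0)
        (fun _ _ => by positivity) hx

lemma rank_le_surrogateRank {f : ι → ℝ} {ℓ : ℝ → ℝ}
    (hdom : ∀ x' ∈ s, (if 0 ≤ f x' - f x then (1 : ℝ) else 0) ≤ ℓ (f x' - f x)) :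
    rank f s x ≤ surrogateRank ℓ f s x :=
  sum_le_sum hdom

lemma logb_rank_pos (f : ι → ℝ) (hx : x ∈ s) : 0 < logb 2 (rank f s x + 1) :=
  logb_pos one_lt_two (by linarith [one_le_rank f hx])

lemma logb_rank_le_logb_surrogateRank {f : ι → ℝ} {ℓ : ℝ → ℝ}
    (hdom : ∀ x' ∈ s, (if 0 ≤ f x' - f x then (1 : ℝ) else 0) ≤ ℓ (f x' - f x))
    (hx : x ∈ s) : logb 2 (rank f s x + 1) ≤ logb 2 (surrogateRank ℓ f s x + 1) :=
  logb_le_logb_of_le one_lt_two (by linarith [one_le_rank f hx])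
    (by linarith [rank_le_surrogateRank hdom])

end Rank

lemma mul_div_le_of_le_mul {p t A C Z L L' : ℝ} (hC : 0 < C) (hZ : 0 < Z) (hL : 0 < L)
    (hLL' : L ≤ L') (hA : 0 ≤ A) (ht : 0 ≤ t) (hp : p ≤ C * t) :
    p * A / (C * Z * L') ≤ 1 / Z * (t * A / L) :=
  calc p * A / (C * Z * L') = p / C * (A / (Z * L')) := by ring
    _ ≤ t * (A / (Z * L)) :=
      mul_le_mul ((div_le_iff₀' hC).2 hp) (by gcongr)
        (div_nonneg hA (mul_pos hZ (hL.trans_le hLL')).le) ht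
    _ = 1 / Z * (t * A / L) := by ring

theorem topK_ndcg_surrogate_lower_bound_general
    {ι : Type*} (N : ℕ)
    (S : Fin N → Finset ι)
    (y : Fin N → ι → ℝ)
    (ZK : Fin N → ℝ) (hZK : ∀ q, 0 < ZK q)
    (h : Fin N → ι → ℝ)
    (TopK : Fin N → Finset ι)
    (lam : Fin N → ℝ)
    (hlam : ∀ q, ∀ x ∈ S q, (x ∈ TopK q ↔ lam q ≤ h q x))
    (ψ ℓ : ℝ → ℝ) (C : ℝ) (hC : 0 < C)
    (hψ : ∀ q, ∀ x ∈ (S q).filter (fun x => 0 < y q x),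
      ψ (h q x - lam q) ≤ C * (if 0 ≤ h q x - lam q then (1 : ℝ) else 0))
    (hdom : ∀ q, ∀ x' ∈ S q, ∀ x ∈ S q,
      (if 0 ≤ h q x' - h q x then (1 : ℝ) else 0) ≤ ℓ (h q x' - h q x)) :
    (1 / N : ℝ) * ∑ q, ∑ x ∈ (S q).filter (fun x => 0 < y q x),
        ψ (h q x - lam q) * ((2 : ℝ) ^ (y q x) - 1) /
          (C * ZK q * Real.logb 2 ((∑ x' ∈ S q, ℓ (h q x' - h q x)) + 1))
      ≤ (1 / N : ℝ) * ∑ q, (1 / ZK q) *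
        ∑ x ∈ (S q).filter (fun x => 0 < y q x),
          (if x ∈ TopK q then (1 : ℝ) else 0) * ((2 : ℝ) ^ (y q x) - 1) /
            Real.logb 2
              ((∑ x' ∈ S q, if 0 ≤ h q x' - h q x then (1 : ℝ) else 0) + 1) := by
  refine mul_le_mul_of_nonneg_left (sum_le_sum fun q _ => ?_) (by positivity)
  rw [mul_sum]
  refine sum_le_sum fun x hx => ?_
  obtain ⟨hxS, hyx⟩ := mem_filter.mp hx
  have hψ_topK : ψ (h q x - lam q) ≤ C * if x ∈ TopK q then 1 else 0 := by
    simpa only [sub_nonneg, ← hlam q x hxS] using hψ q x hx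
  exact mul_div_le_of_le_mul hC (hZK q) (logb_rank_pos (h q) hxS)
    (logb_rank_le_logb_surrogateRank (fun x' hx' => hdom q x' hx' x hxS) hxS)
    (sub_nonneg.2 (one_le_rpow one_le_two hyx.le)) (by positivity) hψ_topK

/-- if `ψ(h_q(x;w) − λ_q(w)) ≤ C·1[h_q(x;w) − λ_q(w) ≥ 0]` on the relevant
items, the threshold `λ_q(w)` selects exactly the top-K set `S_q[K]`, and the surrogate loss
`ℓ` dominates the 0-1 indicator, then the smoothed top-K NDCG surrogate is a lower bound of
the top-K NDCG value. -/
theorem topK_ndcg_surrogate_lower_bound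
    {ι : Type*} (N K : ℕ) (hN : 0 < N)
    (S : Fin N → Finset ι) (hS : ∀ q, (S q).Nonempty)
    (y : Fin N → ι → ℝ) (hy : ∀ q, ∀ x ∈ S q, 0 ≤ y q x)
    (ZK : Fin N → ℝ) (hZK : ∀ q, 0 < ZK q)
    (h : Fin N → ι → ℝ)
    (hdist : ∀ q, ∀ x ∈ S q, ∀ x' ∈ S q, h q x = h q x' → x = x')
    (TopK : Fin N → Finset ι)
    (hTopSub : ∀ q, TopK q ⊆ S q)
    (hTopCard : ∀ q, (TopK q).card = K)
    (lam : Fin N → ℝ)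
    (hlam : ∀ q, ∀ x ∈ S q, (x ∈ TopK q ↔ lam q ≤ h q x))
    (ψ ℓ : ℝ → ℝ) (C : ℝ) (hC : 0 < C)
    (hψ : ∀ q, ∀ x ∈ (S q).filter (fun x => 0 < y q x),
      ψ (h q x - lam q) ≤ C * (if 0 ≤ h q x - lam q then (1 : ℝ) else 0))
    (hdom : ∀ q, ∀ x' ∈ S q, ∀ x ∈ S q,
      (if 0 ≤ h q x' - h q x then (1 : ℝ) else 0) ≤ ℓ (h q x' - h q x)) :
    (1 / N : ℝ) * ∑ q, ∑ x ∈ (S q).filter (fun x => 0 < y q x),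
        ψ (h q x - lam q) * ((2 : ℝ) ^ (y q x) - 1) /
          (C * ZK q * Real.logb 2 ((∑ x' ∈ S q, ℓ (h q x' - h q x)) + 1))
      ≤ (1 / N : ℝ) * ∑ q, (1 / ZK q) *
        ∑ x ∈ (S q).filter (fun x => 0 < y q x),
          (if x ∈ TopK q then (1 : ℝ) else 0) * ((2 : ℝ) ^ (y q x) - 1) /
            Real.logb 2
              ((∑ x' ∈ S q, if 0 ≤ h q x' - h q x then (1 : ℝ) else 0) + 1) :=
  topK_ndcg_surrogate_lower_bound_general N S y ZK hZK h TopK lam hlam ψ ℓ C hC hψ hdom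
end

section
/- Fix τ₁ > 0, τ₂ > 0, an integer K, an integer N ≥ 1, and real numbers h_1, …, h_N. Let L(λ) = (K/N)λ + (τ₂/2)λ² + (1/N) Σ_{i=1}^N τ₁ ln(1 + exp((h_i − λ)/τ₁)) and L̃(λ) = (K/N)λ + (1/N) Σ_{i=1}^N max(h_i − λ, 0). Let λ* be a minimizer of L and λ̃* be a minimizer of L̃. Then L̃(λ*) − L̃(λ̃*) ≤ (τ₂/2)(λ̃*)² + τ₁·ln 2 − (τ₂/2)(λ*)²; in particular, since L̃(λ*) ≥ L̃(λ̃*), one has |L̃(λ*) − L̃(λ̃*)| ≤ (τ₂/2)(λ̃*)² + τ₁·ln 2 − (τ₂/2)(λ*)². -/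
open Finset

/-- The smoothed lower-level objective
`L(λ) = (K/N)λ + (τ₂/2)λ² + (1/N) Σᵢ τ₁ ln(1 + exp((hᵢ − λ)/τ₁))`. -/
noncomputable def smoothedL (τ₁ τ₂ : ℝ) (K : ℤ) (N : ℕ) (h : Fin N → ℝ) (lam : ℝ) : ℝ :=
  ((K : ℝ) / N) * lam + (τ₂ / 2) * lam ^ 2 +
    (1 / N : ℝ) * ∑ i, τ₁ * Real.log (1 + Real.exp ((h i - lam) / τ₁))

/-- The unsmoothed, unregularized objective `L̃(λ) = (K/N)λ + (1/N) Σᵢ max(hᵢ − λ, 0)`. -/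
noncomputable def Ltilde (K : ℤ) (N : ℕ) (h : Fin N → ℝ) (lam : ℝ) : ℝ :=
  ((K : ℝ) / N) * lam + (1 / N : ℝ) * ∑ i, max (h i - lam) 0

/-! The softplus `τ log (1 + exp (x / τ))` lies between `max x 0` and `max x 0 + τ log 2`, so
`L(λ) - (τ₂/2)λ²` is sandwiched between `L̃(λ)` and `L̃(λ) + τ₁ log 2`. Chaining the lower bound at
`λ*`, the minimality `L(λ*) ≤ L(λ̃*)` and the upper bound at `λ̃*` gives the estimate; its left side
is nonnegative since `λ̃*` minimises `L̃`. -/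

open Real

lemma max_le_log_one_add_exp (y : ℝ) : max y 0 ≤ log (1 + exp y) := by
  have hpos : 0 < 1 + exp y := by positivity
  refine max_le ?_ (log_nonneg (by linarith [exp_pos y]))
  exact (le_log_iff_exp_le hpos).2 (by linarith)

lemma log_one_add_exp_le (y : ℝ) : log (1 + exp y) ≤ max y 0 + log 2 := by
  refine (log_le_iff_le_exp (by positivity)).2 ?_
  rw [exp_add, exp_log two_pos]
  have hy : exp y ≤ exp (max y 0) := exp_le_exp.2 (le_max_left y 0)
  have h1 : 1 ≤ exp (max y 0) := one_le_exp (le_max_right y 0)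
  linarith

lemma mul_max_div_zero {τ : ℝ} (hτ : 0 < τ) (x : ℝ) : τ * max (x / τ) 0 = max x 0 := by
  rw [mul_max_of_nonneg _ _ hτ.le, mul_div_cancel₀ x hτ.ne', mul_zero]

lemma max_le_mul_log_one_add_exp_div {τ : ℝ} (hτ : 0 < τ) (x : ℝ) :
    max x 0 ≤ τ * log (1 + exp (x / τ)) := by
  rw [← mul_max_div_zero hτ x]
  exact mul_le_mul_of_nonneg_left (max_le_log_one_add_exp _) hτ.le

lemma mul_log_one_add_exp_div_le {τ : ℝ} (hτ : 0 < τ) (x : ℝ) :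
    τ * log (1 + exp (x / τ)) ≤ max x 0 + τ * log 2 := by
  rw [← mul_max_div_zero hτ x, ← mul_add]
  exact mul_le_mul_of_nonneg_left (log_one_add_exp_le _) hτ.le

lemma one_div_mul_sum_le_of_le {N : ℕ} {f : Fin N → ℝ} {c : ℝ} (hc : 0 ≤ c) (hf : ∀ i, f i ≤ c) :
    (1 / N : ℝ) * ∑ i, f i ≤ c := by
  rcases N.eq_zero_or_pos with rfl | hN
  · simpa using hc
  rw [one_div, inv_mul_le_iff₀ (by exact_mod_cast hN)]
  simpa using Finset.sum_le_card_nsmul univ f c fun i _ ↦ hf i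

section Objectives

variable (τ₁ τ₂ : ℝ) (K : ℤ) (N : ℕ) (h : Fin N → ℝ) (lam : ℝ)

lemma smoothedL_sub_Ltilde :
    smoothedL τ₁ τ₂ K N h lam - Ltilde K N h lam = τ₂ / 2 * lam ^ 2 +
      (1 / N : ℝ) * ∑ i, (τ₁ * log (1 + exp ((h i - lam) / τ₁)) - max (h i - lam) 0) := by
  rw [smoothedL, Ltilde, sum_sub_distrib]
  ring

lemma Ltilde_le_smoothedL_sub (hτ₁ : 0 < τ₁) :
    Ltilde K N h lam ≤ smoothedL τ₁ τ₂ K N h lam - τ₂ / 2 * lam ^ 2 := by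
  have hsoft : 0 ≤ ∑ i, (τ₁ * log (1 + exp ((h i - lam) / τ₁)) - max (h i - lam) 0) :=
    sum_nonneg fun i _ ↦ sub_nonneg.2 (max_le_mul_log_one_add_exp_div hτ₁ _)
  have := smoothedL_sub_Ltilde τ₁ τ₂ K N h lam
  have hmean := mul_nonneg (one_div_nonneg.2 (Nat.cast_nonneg N : (0 : ℝ) ≤ N)) hsoft
  linarith

lemma smoothedL_sub_le_Ltilde_add (hτ₁ : 0 < τ₁) :
    smoothedL τ₁ τ₂ K N h lam - τ₂ / 2 * lam ^ 2 ≤ Ltilde K N h lam + τ₁ * log 2 := by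
  have hsoft := one_div_mul_sum_le_of_le (mul_nonneg hτ₁.le (log_nonneg one_le_two))
    fun i ↦ sub_le_iff_le_add'.2 (mul_log_one_add_exp_div_le hτ₁ (h i - lam))
  have := smoothedL_sub_Ltilde τ₁ τ₂ K N h lam
  linarith

end Objectives

theorem Ltilde_gap_bound_general
    (τ₁ τ₂ : ℝ) (hτ₁ : 0 < τ₁) (K : ℤ) (N : ℕ)
    (h : Fin N → ℝ) (lamS lamT : ℝ)
    (hminS : ∀ μ : ℝ, smoothedL τ₁ τ₂ K N h lamS ≤ smoothedL τ₁ τ₂ K N h μ)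
    (hminT : ∀ μ : ℝ, Ltilde K N h lamT ≤ Ltilde K N h μ) :
    Ltilde K N h lamS - Ltilde K N h lamT ≤
        (τ₂ / 2) * lamT ^ 2 + τ₁ * Real.log 2 - (τ₂ / 2) * lamS ^ 2 ∧
      |Ltilde K N h lamS - Ltilde K N h lamT| ≤
        (τ₂ / 2) * lamT ^ 2 + τ₁ * Real.log 2 - (τ₂ / 2) * lamS ^ 2 := by
  have hgap : Ltilde K N h lamS - Ltilde K N h lamT ≤
      (τ₂ / 2) * lamT ^ 2 + τ₁ * Real.log 2 - (τ₂ / 2) * lamS ^ 2 := by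
    linarith [Ltilde_le_smoothedL_sub τ₁ τ₂ K N h lamS hτ₁, hminS lamT,
      smoothedL_sub_le_Ltilde_add τ₁ τ₂ K N h lamT hτ₁]
  refine ⟨hgap, ?_⟩
  rwa [abs_of_nonneg (sub_nonneg.2 (hminT lamS))]

/-- if `λ*` minimizes `L` and `λ̃*` minimizes `L̃`, then
`L̃(λ*) − L̃(λ̃*) ≤ (τ₂/2)(λ̃*)² + τ₁ ln 2 − (τ₂/2)(λ*)²`, and the same bound holds for
`|L̃(λ*) − L̃(λ̃*)|`. -/
theorem Ltilde_gap_bound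
    (τ₁ τ₂ : ℝ) (hτ₁ : 0 < τ₁) (hτ₂ : 0 < τ₂) (K : ℤ) (N : ℕ) (hN : 1 ≤ N)
    (h : Fin N → ℝ) (lamS lamT : ℝ)
    (hminS : ∀ μ : ℝ, smoothedL τ₁ τ₂ K N h lamS ≤ smoothedL τ₁ τ₂ K N h μ)
    (hminT : ∀ μ : ℝ, Ltilde K N h lamT ≤ Ltilde K N h μ) :
    Ltilde K N h lamS - Ltilde K N h lamT ≤
        (τ₂ / 2) * lamT ^ 2 + τ₁ * Real.log 2 - (τ₂ / 2) * lamS ^ 2 ∧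
      |Ltilde K N h lamS - Ltilde K N h lamT| ≤
        (τ₂ / 2) * lamT ^ 2 + τ₁ * Real.log 2 - (τ₂ / 2) * lamS ^ 2 :=
  Ltilde_gap_bound_general τ₁ τ₂ hτ₁ K N h lamS lamT hminS hminT
end

section
/- Fix ε > 0, an integer K, an integer N ≥ 1, a constant c_h > 0, and real numbers h_1, …, h_N with 0 < h_i ≤ c_h. Set τ₁ = τ₂ = ε, let L(λ) = (K/N)λ + (ε/2)λ² + (1/N) Σ_{i=1}^N ε ln(1 + exp((h_i − λ)/ε)) and L̃(λ) = (K/N)λ + (1/N) Σ_{i=1}^N max(h_i − λ, 0). Let λ* be a minimizer of L and λ̃* a minimizer of L̃ with 0 ≤ λ̃* ≤ 2c_h. Suppose there is a constant c₁ > 0 such that |λ − λ̃*| ≤ c₁ (L̃(λ) − L̃(λ̃*)) for all λ ∈ ℝ (a quadratic-growth/sharpness condition for L̃ at its minimizer). Then |λ* − λ̃*| ≤ c₁ ((ε/2)(λ̃*)² + ε ln 2 − (ε/2)(λ*)²) ≤ c₁ (2 c_h² + ln 2) ε. -/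
/-!
Termwise, the softplus `ε log(1 + exp(x/ε))` lies between `max x 0` and `max x 0 + ε log 2`, so
`L̃ + (ε/2)λ² ≤ L ≤ L̃ + (ε/2)λ² + ε log 2`. Comparing `L(λ*) ≤ L(λ̃*)` through this sandwich bounds
`L̃(λ*) − L̃(λ̃*)` by `(ε/2)(λ̃*)² + ε log 2 − (ε/2)(λ*)²`, and sharp growth turns this into a bound
on `|λ* − λ̃*|`; finally `(λ̃*)² ≤ 4c_h²` and `(λ*)² ≥ 0`.
-/

open Finset

namespace Real

lemma max_zero_le_log_one_add_exp (t : ℝ) : max t 0 ≤ log (1 + exp t) := by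
  have hpos : 0 < exp t := exp_pos t
  refine max_le ?_ (log_nonneg (by linarith))
  calc t = log (exp t) := (log_exp t).symm
    _ ≤ log (1 + exp t) := log_le_log hpos (by linarith)

lemma log_one_add_exp_le_max_zero_add_log_two (t : ℝ) :
    log (1 + exp t) ≤ max t 0 + log 2 := by
  have hexp : 1 + exp t ≤ 2 * exp (max t 0) := by
    have h_one : 1 ≤ exp (max t 0) := one_le_exp (le_max_right t 0)
    have h_mono : exp t ≤ exp (max t 0) := exp_le_exp.mpr (le_max_left t 0)
    linarith
  calc log (1 + exp t) ≤ log (2 * exp (max t 0)) := log_le_log (by positivity) hexp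
    _ = max t 0 + log 2 := by rw [log_mul two_ne_zero (exp_pos _).ne', log_exp, add_comm]

lemma max_zero_le_mul_log_one_add_exp_div {ε : ℝ} (hε : 0 < ε) (x : ℝ) :
    max x 0 ≤ ε * log (1 + exp (x / ε)) := by
  calc max x 0 = ε * max (x / ε) 0 := by
        rw [mul_max_of_nonneg _ _ hε.le, mul_div_cancel₀ x hε.ne', mul_zero]
    _ ≤ ε * log (1 + exp (x / ε)) := by gcongr; exact max_zero_le_log_one_add_exp _

lemma mul_log_one_add_exp_div_le {ε : ℝ} (hε : 0 < ε) (x : ℝ) :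
    ε * log (1 + exp (x / ε)) ≤ max x 0 + ε * log 2 := by
  calc ε * log (1 + exp (x / ε)) ≤ ε * (max (x / ε) 0 + log 2) := by
        gcongr; exact log_one_add_exp_le_max_zero_add_log_two _
    _ = max x 0 + ε * log 2 := by
        rw [mul_add, mul_max_of_nonneg _ _ hε.le, mul_div_cancel₀ x hε.ne', mul_zero]

end Real

section Sandwich

variable {ε : ℝ} (K : ℤ) {N : ℕ} (h : Fin N → ℝ) (lam : ℝ)

lemma Ltilde_add_le_smoothedL (hε : 0 < ε) :
    Ltilde K N h lam + (ε / 2) * lam ^ 2 ≤ smoothedL ε ε K N h lam := by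
  have hsum : ∑ i, max (h i - lam) 0 ≤ ∑ i, ε * Real.log (1 + Real.exp ((h i - lam) / ε)) :=
    sum_le_sum fun i _ ↦ Real.max_zero_le_mul_log_one_add_exp_div hε _
  have := mul_le_mul_of_nonneg_left hsum (by positivity : (0 : ℝ) ≤ 1 / N)
  rw [Ltilde, smoothedL]
  linarith

lemma smoothedL_le_Ltilde_add (hε : 0 < ε) (hN : 1 ≤ N) :
    smoothedL ε ε K N h lam ≤ Ltilde K N h lam + (ε / 2) * lam ^ 2 + ε * Real.log 2 := by
  have hsum : ∑ i, ε * Real.log (1 + Real.exp ((h i - lam) / ε)) ≤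
      ∑ i, max (h i - lam) 0 + N * (ε * Real.log 2) := by
    simpa [sum_add_distrib] using
      sum_le_sum fun i (_ : i ∈ univ) ↦ Real.mul_log_one_add_exp_div_le hε (h i - lam)
  have := mul_le_mul_of_nonneg_left hsum (by positivity : (0 : ℝ) ≤ 1 / N)
  have hN' : (N : ℝ) ≠ 0 := by positivity
  rw [mul_add, one_div, inv_mul_cancel_left₀ hN', ← one_div] at this
  rw [Ltilde, smoothedL]
  linarith

end Sandwich

theorem smoothed_minimizer_close_general
    (ε : ℝ) (hε : 0 < ε) (K : ℤ) (N : ℕ) (hN : 1 ≤ N)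
    (c_h : ℝ) (h : Fin N → ℝ)
    (lamS lamT c₁ : ℝ) (hc₁ : 0 < c₁)
    (hminS : ∀ μ : ℝ, smoothedL ε ε K N h lamS ≤ smoothedL ε ε K N h μ)
    (hT0 : 0 ≤ lamT) (hT2 : lamT ≤ 2 * c_h)
    (hsharp : ∀ lam : ℝ, |lam - lamT| ≤ c₁ * (Ltilde K N h lam - Ltilde K N h lamT)) :
    |lamS - lamT| ≤ c₁ * ((ε / 2) * lamT ^ 2 + ε * Real.log 2 - (ε / 2) * lamS ^ 2) ∧
      c₁ * ((ε / 2) * lamT ^ 2 + ε * Real.log 2 - (ε / 2) * lamS ^ 2) ≤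
        c₁ * (2 * c_h ^ 2 + Real.log 2) * ε := by
  have hgap : Ltilde K N h lamS - Ltilde K N h lamT ≤
      (ε / 2) * lamT ^ 2 + ε * Real.log 2 - (ε / 2) * lamS ^ 2 := by
    linarith [Ltilde_add_le_smoothedL K h lamS hε, hminS lamT,
      smoothedL_le_Ltilde_add K h lamT hε hN]
  refine ⟨(hsharp lamS).trans (mul_le_mul_of_nonneg_left hgap hc₁.le), ?_⟩
  have hT : lamT ^ 2 ≤ 4 * c_h ^ 2 := by nlinarith
  have hS : 0 ≤ (ε / 2) * lamS ^ 2 := by positivity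
  rw [mul_assoc]
  gcongr
  nlinarith

/-- with `τ₁ = τ₂ = ε`, a minimizer `λ*` of `L`, a minimizer `λ̃* ∈ [0, 2c_h]`
of `L̃`, and the sharp-growth condition `|λ − λ̃*| ≤ c₁(L̃(λ) − L̃(λ̃*))`, one has
`|λ* − λ̃*| ≤ c₁((ε/2)(λ̃*)² + ε ln 2 − (ε/2)(λ*)²) ≤ c₁(2c_h² + ln 2)ε`. -/
theorem smoothed_minimizer_close
    (ε : ℝ) (hε : 0 < ε) (K : ℤ) (N : ℕ) (hN : 1 ≤ N)
    (c_h : ℝ) (hc : 0 < c_h) (h : Fin N → ℝ)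
    (hh : ∀ i, 0 < h i ∧ h i ≤ c_h)
    (lamS lamT c₁ : ℝ) (hc₁ : 0 < c₁)
    (hminS : ∀ μ : ℝ, smoothedL ε ε K N h lamS ≤ smoothedL ε ε K N h μ)
    (hminT : ∀ μ : ℝ, Ltilde K N h lamT ≤ Ltilde K N h μ)
    (hT0 : 0 ≤ lamT) (hT2 : lamT ≤ 2 * c_h)
    (hsharp : ∀ lam : ℝ, |lam - lamT| ≤ c₁ * (Ltilde K N h lam - Ltilde K N h lamT)) :
    |lamS - lamT| ≤ c₁ * ((ε / 2) * lamT ^ 2 + ε * Real.log 2 - (ε / 2) * lamS ^ 2) ∧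
      c₁ * ((ε / 2) * lamT ^ 2 + ε * Real.log 2 - (ε / 2) * lamS ^ 2) ≤
        c₁ * (2 * c_h ^ 2 + Real.log 2) * ε :=
  smoothed_minimizer_close_general ε hε K N hN c_h h lamS lamT c₁ hc₁ hminS hT0 hT2 hsharp
end

section
/- Let F : ℝ^d → ℝ be differentiable with L_F-Lipschitz continuous gradient, let η > 0 satisfy η·L_F ≤ 1/2, let m ∈ ℝ^d, and set w′ = w − η·m. Then F(w′) ≤ F(w) + (η/2)‖∇F(w) − m‖² − (η/2)‖∇F(w)‖² − (η/4)‖m‖². -/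
open Set

/-
Along the ray `t ↦ x + t v` the slope `⟪∇F (x + t v), v⟫` of `F` exceeds `⟪∇F x, v⟫` by at most
`L t ‖v‖²`, so `t ↦ F (x + t v) - t ⟪∇F x, v⟫ - (L / 2) t² ‖v‖²` is antitone on `t ≥ 0`; comparing
`t = 1` with `t = 0` gives `F (x + v) ≤ F x + ⟪∇F x, v⟫ + (L / 2) ‖v‖²`. For `v = -η m` and
`η L ≤ 1/2` the quadratic term is at most `(η / 4) ‖m‖²`, and expanding `‖∇F w - m‖²` gives the
claim.
-/

variable {E : Type*} [NormedAddCommGroup E] [InnerProductSpace ℝ E] [CompleteSpace E]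

theorem HasGradientAt.hasDerivAt_comp_add_smul {f : E → ℝ} {g x v : E} {t : ℝ}
    (hf : HasGradientAt f g (x + t • v)) :
    HasDerivAt (fun s : ℝ => f (x + s • v)) (inner ℝ g v) t := by
  have hline : HasDerivAt (fun s : ℝ => x + s • v) v t := by
    simpa using ((hasDerivAt_id t).smul_const v).const_add x
  exact hf.hasFDerivAt.comp_hasDerivAt t hline

theorem inner_gradient_sub_le_of_lipschitz {F : E → ℝ} {L : ℝ}
    (hLip : ∀ x y, ‖gradient F x - gradient F y‖ ≤ L * ‖x - y‖) (x v : E) {t : ℝ} (ht : 0 ≤ t) :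
    inner ℝ (gradient F (x + t • v) - gradient F x) v ≤ L * t * ‖v‖ ^ 2 :=
  calc inner ℝ (gradient F (x + t • v) - gradient F x) v
      ≤ ‖gradient F (x + t • v) - gradient F x‖ * ‖v‖ := real_inner_le_norm _ _
    _ ≤ L * ‖t • v‖ * ‖v‖ := by
        gcongr
        simpa using hLip (x + t • v) x
    _ = L * t * ‖v‖ ^ 2 := by rw [norm_smul, Real.norm_of_nonneg ht]; ring

theorem le_add_inner_gradient_add_of_lipschitz_gradient {F : E → ℝ} {L : ℝ}
    (hdiff : Differentiable ℝ F)
    (hLip : ∀ x y, ‖gradient F x - gradient F y‖ ≤ L * ‖x - y‖) (x v : E) :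
    F (x + v) ≤ F x + inner ℝ (gradient F x) v + L / 2 * ‖v‖ ^ 2 := by
  set g : ℝ → ℝ := fun t =>
    F (x + t • v) - t * inner ℝ (gradient F x) v - L / 2 * t ^ 2 * ‖v‖ ^ 2 with hg
  have hderiv (t : ℝ) : HasDerivAt g
      (inner ℝ (gradient F (x + t • v) - gradient F x) v - L * t * ‖v‖ ^ 2) t := by
    have hF := (hdiff (x + t • v)).hasGradientAt.hasDerivAt_comp_add_smul
    refine ((hF.sub ((hasDerivAt_id t).mul_const (inner ℝ (gradient F x) v))).sub
      (((hasDerivAt_pow 2 t).const_mul (L / 2)).mul_const (‖v‖ ^ 2))).congr_deriv ?_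
    rw [inner_sub_left]
    ring
  have hanti : AntitoneOn g (Ici 0) := by
    refine antitoneOn_of_hasDerivWithinAt_nonpos (convex_Ici 0)
      (fun t _ => (hderiv t).continuousAt.continuousWithinAt)
      (fun t _ => (hderiv t).hasDerivWithinAt) fun t ht => ?_
    rw [interior_Ici] at ht
    exact sub_nonpos.2 (inner_gradient_sub_le_of_lipschitz hLip x v ht.le)
  have h01 : g 1 ≤ g 0 := hanti self_mem_Ici (mem_Ici.2 zero_le_one) zero_le_one
  simp only [hg, one_smul, zero_smul, add_zero] at h01
  linarith

/-- descent lemma with momentum direction: if `F : ℝ^d → ℝ` is differentiable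
with `L_F`-Lipschitz gradient, `η L_F ≤ 1/2`, and `w' = w − η m`, then
`F(w') ≤ F(w) + (η/2)‖∇F(w) − m‖² − (η/2)‖∇F(w)‖² − (η/4)‖m‖²`. -/
theorem descent_lemma_momentum
    {d : ℕ} (F : EuclideanSpace ℝ (Fin d) → ℝ) (L_F : ℝ)
    (hdiff : Differentiable ℝ F)
    (hLip : ∀ x y : EuclideanSpace ℝ (Fin d),
      ‖gradient F x - gradient F y‖ ≤ L_F * ‖x - y‖)
    (η : ℝ) (hη : 0 < η) (hηL : η * L_F ≤ 1 / 2)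
    (w m : EuclideanSpace ℝ (Fin d)) :
    F (w - η • m) ≤
      F w + (η / 2) * ‖gradient F w - m‖ ^ 2 - (η / 2) * ‖gradient F w‖ ^ 2 -
        (η / 4) * ‖m‖ ^ 2 := by
  have hdescent := le_add_inner_gradient_add_of_lipschitz_gradient hdiff hLip w (-(η • m))
  rw [← sub_eq_add_neg, inner_neg_right, real_inner_smul_right, norm_neg, norm_smul,
    Real.norm_of_nonneg hη.le] at hdescent
  have hquadratic : L_F / 2 * (η * ‖m‖) ^ 2 ≤ η / 4 * ‖m‖ ^ 2 := by
    have := mul_le_mul_of_nonneg_left hηL (by positivity : 0 ≤ η * ‖m‖ ^ 2)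
    nlinarith
  rw [norm_sub_sq_real]
  linarith
end
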